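/- Let K be a number field, v ∈ M_K a place of K, and F = (F₀,F₁,F₂) a triple of homogeneous polynomials of common degree λ ≥ 2 in K[x₀,x₁,x₂]. Let a ∈ K³ be such that F^n(a) ≠ 0 for every n ≥ 0. Then the limit lim_{n→∞} λ^{-n} · log‖F^n(a)‖_v exists and is a finite real number (in particular it is not −∞). -/
import Mathlib

open MvPolynomial Filter

/-- The polynomial map `K³ → K³` induced by a triple of polynomials. -/
noncomputable def polyMap {K : Type*} [Field K] (P : Fin 3 → MvPolynomial (Fin 3) K) :
    (Fin 3 → K) → (Fin 3 → K) :=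
  fun a i => eval a (P i)

/-- `‖b‖_v = max (|b₀|_v, |b₁|_v, |b₂|_v)`. -/
noncomputable def vNorm {K : Type*} [Field K] (v : AbsoluteValue K ℝ) (b : Fin 3 → K) : ℝ :=
  max (v (b 0)) (max (v (b 1)) (v (b 2)))

section Aux

variable {K : Type*} [Field K]

lemma coord_le_vNorm (w : AbsoluteValue K ℝ) (b : Fin 3 → K) (i : Fin 3) :
    w (b i) ≤ vNorm w b := by
  fin_cases i
  · exact le_max_left _ _
  · exact le_trans (le_max_left _ _) (le_max_right _ _)
  · exact le_trans (le_max_right _ _) (le_max_right _ _)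

lemma vNorm_nonneg (w : AbsoluteValue K ℝ) (b : Fin 3 → K) : 0 ≤ vNorm w b :=
  le_trans (w.nonneg _) (coord_le_vNorm w b 0)

lemma exists_coord_ne {b : Fin 3 → K} (hb : b ≠ 0) : ∃ i, b i ≠ 0 := by
  by_contra h
  push_neg at h
  exact hb (funext fun i => h i)

lemma vNorm_pos (w : AbsoluteValue K ℝ) {b : Fin 3 → K} (hb : b ≠ 0) : 0 < vNorm w b := by
  obtain ⟨i, hi⟩ := exists_coord_ne hb
  exact lt_of_lt_of_le (w.pos hi) (coord_le_vNorm w b i)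

lemma vNorm_le {w : AbsoluteValue K ℝ} {b : Fin 3 → K} {B : ℝ}
    (h : ∀ i, w (b i) ≤ B) : vNorm w b ≤ B :=
  max_le (h 0) (max_le (h 1) (h 2))

lemma homog_sum_eq {p : MvPolynomial (Fin 3) K} {lam : ℕ} (hp : p.IsHomogeneous lam)
    {d : Fin 3 →₀ ℕ} (hd : coeff d p ≠ 0) : ∑ i, d i = lam := by
  have h2 := hp hd
  rw [Finsupp.weight_apply] at h2
  simp [Finsupp.sum] at h2
  rw [Finset.sum_subset (Finset.subset_univ d.support)] at h2
  · exact h2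
  · intro x _ hx
    simpa using hx

lemma eval_abs_le (w : AbsoluteValue K ℝ) {lam : ℕ} {p : MvPolynomial (Fin 3) K}
    (hp : p.IsHomogeneous lam) (b : Fin 3 → K) :
    w (eval b p) ≤ (∑ m ∈ p.support, w (coeff m p)) * vNorm w b ^ lam := by
  rw [eval_eq']
  refine le_trans (w.sum_le _ _) ?_
  rw [Finset.sum_mul]
  refine Finset.sum_le_sum fun m hm => ?_
  rw [map_mul]
  refine mul_le_mul_of_nonneg_left ?_ (w.nonneg _)
  have h1 : w (∏ i, b i ^ m i) = ∏ i, w (b i) ^ m i := by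
    rw [map_prod]
    simp [map_pow]
  rw [h1]
  calc ∏ i, w (b i) ^ m i ≤ ∏ i, vNorm w b ^ m i := by
        refine Finset.prod_le_prod (fun i _ => pow_nonneg (w.nonneg _) _) fun i _ =>
          pow_le_pow_left₀ (w.nonneg _) (coord_le_vNorm w b i) _
    _ = vNorm w b ^ lam := by
        rw [Finset.prod_pow_eq_pow_sum, homog_sum_eq hp (mem_support_iff.mp hm)]

lemma polyMap_bound_gen (w : AbsoluteValue K ℝ) {lam : ℕ}
    (P : Fin 3 → MvPolynomial (Fin 3) K) (hhom : ∀ i, (P i).IsHomogeneous lam) :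
    ∃ D : ℝ, 1 ≤ D ∧ ∀ b, vNorm w (polyMap P b) ≤ D * vNorm w b ^ lam := by
  set S : Fin 3 → ℝ := fun i => ∑ m ∈ (P i).support, w (coeff m (P i)) with hS
  refine ⟨max 1 (max (S 0) (max (S 1) (S 2))), le_max_left _ _, fun b => ?_⟩
  have hpow : (0:ℝ) ≤ vNorm w b ^ lam := pow_nonneg (vNorm_nonneg w b) _
  refine vNorm_le fun i => ?_
  refine le_trans (eval_abs_le w (hhom i) b) (mul_le_mul_of_nonneg_right ?_ hpow)
  fin_cases i
  · exact le_trans (le_max_left _ _) (le_max_right _ _)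
  · exact le_trans (le_trans (le_max_left _ _) (le_max_right _ _)) (le_max_right _ _)
  · exact le_trans (le_trans (le_max_right _ _) (le_max_right _ _)) (le_max_right _ _)

lemma nonarch_finset_sum {α : Type*} (w : AbsoluteValue K ℝ)
    (hw : ∀ x y : K, w (x + y) ≤ max (w x) (w y))
    (s : Finset α) (g : α → K) {B : ℝ} (hB : 0 ≤ B) (h : ∀ m ∈ s, w (g m) ≤ B) :
    w (∑ m ∈ s, g m) ≤ B := by
  classical
  induction s using Finset.induction with
  | empty => simpa using hB
  | @insert x s hx ih =>
      rw [Finset.sum_insert hx]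
      exact le_trans (hw _ _) (max_le (h _ (Finset.mem_insert_self _ _))
        (ih fun m hm => h m (Finset.mem_insert_of_mem hm)))

lemma polyMap_bound_one (w : AbsoluteValue K ℝ) {lam : ℕ}
    (P : Fin 3 → MvPolynomial (Fin 3) K) (hhom : ∀ i, (P i).IsHomogeneous lam)
    (hw : ∀ x y : K, w (x + y) ≤ max (w x) (w y))
    (hc : ∀ i : Fin 3, ∀ m ∈ (P i).support, w (coeff m (P i)) ≤ 1)
    (b : Fin 3 → K) : vNorm w (polyMap P b) ≤ vNorm w b ^ lam := by
  have hpow : (0:ℝ) ≤ vNorm w b ^ lam := pow_nonneg (vNorm_nonneg w b) _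
  refine vNorm_le fun i => ?_
  show w (eval b (P i)) ≤ _
  rw [eval_eq']
  refine nonarch_finset_sum w hw _ _ hpow fun m hm => ?_
  rw [map_mul]
  have h1 : w (∏ j, b j ^ m j) = ∏ j, w (b j) ^ m j := by
    rw [map_prod]; simp [map_pow]
  calc w (coeff m (P i)) * w (∏ j, b j ^ m j) ≤ 1 * ∏ j, w (b j) ^ m j := by
        rw [h1]
        exact mul_le_mul_of_nonneg_right (hc i m hm)
          (Finset.prod_nonneg fun j _ => pow_nonneg (w.nonneg _) _)
    _ = ∏ j, w (b j) ^ m j := one_mul _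
    _ ≤ vNorm w b ^ lam := by
        calc ∏ j, w (b j) ^ m j ≤ ∏ j, vNorm w b ^ m j :=
              Finset.prod_le_prod (fun j _ => pow_nonneg (w.nonneg _) _) fun j _ =>
                pow_le_pow_left₀ (w.nonneg _) (coord_le_vNorm w b j) _
          _ = vNorm w b ^ lam := by
              rw [Finset.prod_pow_eq_pow_sum, homog_sum_eq (hhom i) (mem_support_iff.mp hm)]

lemma logvNorm_support_finite {ι : Type*} (M : ι → AbsoluteValue K ℝ)
    (hfin : ∀ c : K, c ≠ 0 → (Function.support fun w => Real.log (M w c)).Finite)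
    {b : Fin 3 → K} (hb : b ≠ 0) :
    (Function.support fun w => Real.log (vNorm (M w) b)).Finite := by
  have hsub : (Function.support fun w => Real.log (vNorm (M w) b)) ⊆
      ⋃ i : Fin 3, ⋃ (_ : b i ≠ 0), (Function.support fun w => Real.log (M w (b i))) := by
    intro w hw
    by_contra hw2
    simp only [Set.mem_iUnion, not_exists] at hw2
    apply hw
    have hcoord : ∀ i : Fin 3, b i ≠ 0 → M w (b i) = 1 := by
      intro i hbi
      have h0 : Real.log (M w (b i)) = 0 := by
        by_contra hne
        exact hw2 i hbi hne
      rcases Real.log_eq_zero.mp h0 with h | h | h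
      · exact absurd h (ne_of_gt ((M w).pos hbi))
      · exact h
      · exact absurd h (by nlinarith [(M w).nonneg (b i)])
    have h1 : vNorm (M w) b = 1 := by
      obtain ⟨i, hi⟩ := exists_coord_ne hb
      refine le_antisymm (vNorm_le fun j => ?_) ?_
      · by_cases hbj : b j = 0
        · simp [hbj]
        · exact le_of_eq (hcoord j hbj)
      · rw [← hcoord i hi]
        exact coord_le_vNorm (M w) b i
    simp [Function.mem_support, h1]
  refine Set.Finite.subset ?_ hsub
  exact Set.finite_iUnion fun i => Set.finite_iUnion fun hi => hfin _ hi

end Aux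
/-- existence and finiteness of the `v`-adic escape rate
`lim_n λ^{-n} log‖F^n(a)‖_v` for a homogeneous lift `F` of degree `λ ≥ 2`. -/
theorem stmt_1 {K : Type*} [Field K] [NumberField K]
    {ι : Type*} (M : ι → AbsoluteValue K ℝ)
    (hnontriv : ∀ w : ι, ∃ x : K, x ≠ 0 ∧ M w x ≠ 1)
    (hfin : ∀ c : K, c ≠ 0 → (Function.support fun w => Real.log (M w c)).Finite)
    (hprod : ∀ c : K, c ≠ 0 → ∑ᶠ w : ι, Real.log (M w c) = 0)
    (harch : {w : ι | ¬ ∀ x y : K, M w (x + y) ≤ max (M w x) (M w y)}.Finite)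
    (v : ι)
    (lam : ℕ) (hlam : 2 ≤ lam)
    (P : Fin 3 → MvPolynomial (Fin 3) K)
    (hhom : ∀ i, (P i).IsHomogeneous lam)
    (a : Fin 3 → K)
    (ha : ∀ n : ℕ, (polyMap P)^[n] a ≠ 0) :
    ∃ L : ℝ, Tendsto
      (fun n : ℕ => ((lam : ℝ)⁻¹) ^ n * Real.log (vNorm (M v) ((polyMap P)^[n] a)))
      atTop (nhds L) := by
  classical
  have hlamR : (2:ℝ) ≤ (lam:ℝ) := by exact_mod_cast hlam
  have hlam0 : (lam:ℝ) ≠ 0 := by positivity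
  set r : ℝ := ((lam:ℝ))⁻¹ with hr
  have hr0 : 0 < r := by rw [hr]; positivity
  have hrl : r * (lam:ℝ) = 1 := inv_mul_cancel₀ hlam0
  have hr1 : r < 1 := by nlinarith [hrl, hlamR, hr0]
  -- the multiplicative bound at each place
  have hgen : ∀ w : ι, ∃ D : ℝ, 1 ≤ D ∧
      ∀ b, vNorm (M w) (polyMap P b) ≤ D * vNorm (M w) b ^ lam :=
    fun w => polyMap_bound_gen (M w) P hhom
  set D : ι → ℝ := fun w =>
    if (∀ b, vNorm (M w) (polyMap P b) ≤ vNorm (M w) b ^ lam) then 1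
    else (hgen w).choose with hD
  have hD1 : ∀ w, 1 ≤ D w := by
    intro w
    rw [hD]; dsimp only
    split
    · exact le_refl 1
    · exact (hgen w).choose_spec.1
  have hDb : ∀ w b, vNorm (M w) (polyMap P b) ≤ D w * vNorm (M w) b ^ lam := by
    intro w b
    rw [hD]; dsimp only
    split
    · rename_i h; rw [one_mul]; exact h b
    · exact (hgen w).choose_spec.2 b
  have hDfin : {w | D w ≠ 1}.Finite := by
    have hsub : {w | D w ≠ 1} ⊆
        {w : ι | ¬ ∀ x y : K, M w (x + y) ≤ max (M w x) (M w y)} ∪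
        ⋃ i : Fin 3, ⋃ m ∈ (P i).support, {w : ι | 1 < M w (coeff m (P i))} := by
      intro w hw
      by_contra hw2
      simp only [Set.mem_union, Set.mem_iUnion, Set.mem_setOf_eq, not_or, not_exists,
        not_lt] at hw2
      obtain ⟨hna, hco⟩ := hw2
      rw [not_not] at hna
      apply hw
      show D w = 1
      rw [hD]; dsimp only
      rw [if_pos]
      exact polyMap_bound_one (M w) P hhom hna fun i m hm => hco i m hm
    refine Set.Finite.subset (Set.Finite.union harch ?_) hsub
    refine Set.finite_iUnion fun i => ?_
    refine Set.Finite.biUnion (P i).support.finite_toSet fun m hm => ?_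
    have hmne : coeff m (P i) ≠ 0 := mem_support_iff.mp hm
    refine Set.Finite.subset (hfin _ hmne) ?_
    intro w hw
    simp only [Set.mem_setOf_eq] at hw
    simp only [Function.mem_support]
    exact ne_of_gt (Real.log_pos hw)
  -- log norms along the orbit
  set u : ι → ℕ → ℝ := fun w n => Real.log (vNorm (M w) ((polyMap P)^[n] a)) with hu
  have hposn : ∀ (w : ι) (n : ℕ), 0 < vNorm (M w) ((polyMap P)^[n] a) :=
    fun w n => vNorm_pos _ (ha n)
  set c : ι → ℝ := fun w => Real.log (D w) with hc
  have hc0 : ∀ w, 0 ≤ c w := fun w => Real.log_nonneg (hD1 w)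
  have hrec : ∀ (w : ι) (n : ℕ), u w (n+1) ≤ (lam:ℝ) * u w n + c w := by
    intro w n
    have h1 : vNorm (M w) ((polyMap P)^[n+1] a)
        ≤ D w * vNorm (M w) ((polyMap P)^[n] a) ^ lam := by
      rw [Function.iterate_succ_apply']
      exact hDb w _
    have h2 := Real.log_le_log (hposn w (n+1)) h1
    rw [Real.log_mul (by linarith [hD1 w]) (ne_of_gt (pow_pos (hposn w n) _)),
      Real.log_pow] at h2
    simp only [hu, hc]
    linarith [h2]
  set Kc : ι → ℝ := fun w => c w * ((lam:ℝ) - 1)⁻¹ with hKc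
  have hK0 : ∀ w, 0 ≤ Kc w := by
    intro w
    rw [hKc]; dsimp only
    have h1 : (0:ℝ) ≤ ((lam:ℝ) - 1)⁻¹ := by
      refine inv_nonneg.mpr ?_; linarith
    exact mul_nonneg (hc0 w) h1
  have hKeq : ∀ w, ((lam:ℝ) - 1) * Kc w = c w := by
    intro w
    rw [hKc]; dsimp only
    have h1 : ((lam:ℝ) - 1) ≠ 0 := by intro h; nlinarith
    field_simp
  have hgrow : ∀ (w : ι) (n : ℕ), u w n ≤ (lam:ℝ)^n * (u w 0 + Kc w) - Kc w := by
    intro w n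
    induction n with
    | zero => simp
    | succ n ih =>
        have h2 : (lam:ℝ) * u w n ≤ (lam:ℝ) * ((lam:ℝ)^n * (u w 0 + Kc w) - Kc w) :=
          mul_le_mul_of_nonneg_left ih (by linarith)
        have h3 : (lam:ℝ)^(n+1) * (u w 0 + Kc w)
            = (lam:ℝ) * ((lam:ℝ)^n * (u w 0 + Kc w)) := by ring
        have h4 := hrec w n
        have h5 := hKeq w
        nlinarith [h2, h3, h4, h5]
  have hrB : ∀ (w : ι) (n : ℕ), r^n * u w n ≤ u w 0 + Kc w := by
    intro w n
    have h1 : r^n * u w n ≤ r^n * ((lam:ℝ)^n * (u w 0 + Kc w) - Kc w) :=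
      mul_le_mul_of_nonneg_left (hgrow w n) (le_of_lt (pow_pos hr0 n))
    have h2 : r^n * ((lam:ℝ)^n * (u w 0 + Kc w) - Kc w)
        = (u w 0 + Kc w) - r^n * Kc w := by
      rw [mul_sub, ← mul_assoc, ← mul_pow, hrl, one_pow, one_mul]
    have h3 : 0 ≤ r^n * Kc w := mul_nonneg (le_of_lt (pow_pos hr0 n)) (hK0 w)
    linarith [h1, h2, h3]
  set B : ι → ℝ := fun w => u w 0 + Kc w with hB
  have hBfin : (Function.support B).Finite := by
    have hsub : Function.support B ⊆
        (Function.support fun w => u w 0) ∪ {w | D w ≠ 1} := by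
      intro w hw
      by_contra h
      simp only [Set.mem_union, Function.mem_support, not_or, not_not,
        Set.mem_setOf_eq] at h
      apply hw
      show B w = 0
      have hcw : c w = 0 := by rw [hc]; dsimp only; rw [h.2]; exact Real.log_one
      rw [hB]; dsimp only
      rw [h.1, hKc]; dsimp only
      rw [hcw]; ring
    refine Set.Finite.subset (Set.Finite.union ?_ hDfin) hsub
    exact logvNorm_support_finite M hfin (show a ≠ 0 by simpa using ha 0)
  set Btot : ℝ := ∑ w ∈ hBfin.toFinset, max 0 (B w) with hBtot
  have hlow : ∀ n : ℕ, -Btot ≤ r ^ n * u v n := by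
    intro n
    have hsupn : (Function.support fun w => u w n).Finite :=
      logvNorm_support_finite M hfin (ha n)
    set s : Finset ι := (hsupn.union (hBfin.union (Set.finite_singleton v))).toFinset
      with hs
    have hv : v ∈ s := by
      rw [hs, Set.Finite.mem_toFinset]
      exact Or.inr (Or.inr rfl)
    have hsum0 : 0 ≤ ∑ w ∈ s, u w n := by
      obtain ⟨i, hi⟩ := exists_coord_ne (ha n)
      have hgle : ∀ w, Real.log (M w ((polyMap P)^[n] a i)) ≤ u w n := fun w =>
        Real.log_le_log ((M w).pos hi) (coord_le_vNorm (M w) _ i)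
      have hfs : (Function.support fun w => u w n
          - Real.log (M w ((polyMap P)^[n] a i))).Finite :=
        Set.Finite.subset (Set.Finite.union hsupn (hfin _ hi)) (Function.support_sub _ _)
      have h1 : ∑ᶠ w, u w n = ∑ᶠ w, (u w n - Real.log (M w ((polyMap P)^[n] a i)))
          + ∑ᶠ w, Real.log (M w ((polyMap P)^[n] a i)) := by
        rw [← finsum_add_distrib hfs (hfin _ hi)]
        congr 1
        funext w
        ring
      have h2 : 0 ≤ ∑ᶠ w, u w n := by
        rw [h1, hprod _ hi, add_zero]
        exact finsum_nonneg fun w => sub_nonneg.mpr (hgle w)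
      have h3 : ∑ᶠ w, u w n = ∑ w ∈ s, u w n := by
        refine finsum_eq_sum_of_support_subset _ ?_
        rw [hs, Set.Finite.coe_toFinset]
        exact Set.subset_union_left
      linarith [h2, h3.le, h3.symm.le]
    have h4 := Finset.sum_erase_add s (fun w => u w n) hv
    have h6 : ∑ w ∈ s.erase v, r ^ n * u w n ≤ ∑ w ∈ s.erase v, max 0 (B w) :=
      Finset.sum_le_sum fun w _ => le_trans (hrB w n) (le_max_right _ _)
    have h7 : ∑ w ∈ s.erase v, max 0 (B w) ≤ Btot := by
      have h8 : ∑ w ∈ s.erase v, max 0 (B w)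
          = ∑ w ∈ (s.erase v) ∩ hBfin.toFinset, max 0 (B w) := by
        refine (Finset.sum_subset Finset.inter_subset_left ?_).symm
        intro z hz hz2
        have hzB : B z = 0 := by
          by_contra hne
          exact hz2 (Finset.mem_inter.mpr ⟨hz, (Set.Finite.mem_toFinset _).mpr hne⟩)
        simp [hzB]
      rw [hBtot, h8]
      exact Finset.sum_le_sum_of_subset_of_nonneg Finset.inter_subset_right
        (fun i _ _ => le_max_left _ _)
    have h9 : r ^ n * (∑ w ∈ s.erase v, u w n) = ∑ w ∈ s.erase v, r ^ n * u w n :=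
      Finset.mul_sum _ _ _
    have h10 : r ^ n * (∑ w ∈ s.erase v, u w n) + r ^ n * u v n
        = r ^ n * ∑ w ∈ s, u w n := by
      rw [← mul_add, h4]
    have h11 : 0 ≤ r ^ n * ∑ w ∈ s, u w n :=
      mul_nonneg (pow_nonneg hr0.le n) hsum0
    linarith [h6, h7, h9, h10, h11]
  -- the auxiliary antitone sequence
  have hxrec : ∀ n : ℕ, r ^ (n+1) * u v (n+1) + Kc v * r ^ (n+1)
      ≤ r ^ n * u v n + Kc v * r ^ n := by
    intro n
    have h1 := hrec v n
    have h2 : r ^ (n+1) * u v (n+1) ≤ r ^ (n+1) * ((lam:ℝ) * u v n + c v) :=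
      mul_le_mul_of_nonneg_left h1 (pow_nonneg hr0.le _)
    have h3 : r ^ (n+1) * ((lam:ℝ) * u v n + c v)
        = r ^ n * u v n + c v * r ^ (n+1) := by
      rw [pow_succ]
      linear_combination (r ^ n * u v n) * hrl
    have h4 : (c v + Kc v) * r = Kc v := by
      have h5 := hKeq v
      rw [hr]
      field_simp
      linarith [h5]
    have h7 : c v * r ^ (n+1) + Kc v * r ^ (n+1) = Kc v * r ^ n := by
      rw [pow_succ]
      linear_combination (r ^ n) * h4
    linarith [h2, h3, h7]
  have hyant : Antitone (fun n : ℕ => r ^ n * u v n + Kc v * r ^ n) :=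
    antitone_nat_of_succ_le hxrec
  have hybdd : BddBelow (Set.range fun n : ℕ => r ^ n * u v n + Kc v * r ^ n) := by
    refine ⟨-Btot, ?_⟩
    rintro z ⟨n, rfl⟩
    have h1 := hlow n
    have h2 : 0 ≤ Kc v * r ^ n := mul_nonneg (hK0 v) (pow_nonneg hr0.le n)
    dsimp only
    linarith
  have hy := tendsto_atTop_ciInf hyant hybdd
  have hpow : Tendsto (fun n : ℕ => Kc v * r ^ n) atTop (nhds 0) := by
    have h := tendsto_pow_atTop_nhds_zero_of_lt_one hr0.le hr1
    simpa using h.const_mul (Kc v)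
  refine ⟨(⨅ n : ℕ, (r ^ n * u v n + Kc v * r ^ n)) - 0, ?_⟩
  have hfinal := hy.sub hpow
  refine hfinal.congr fun n => ?_
  simp only [hu]
  ring
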